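/- For every commutative ring k and every k-valued measure μ on the class of permutations, one has 1 + μ(i₈) + μ(i₉) + μ(i₁₄) + μ(i₁₅) + μ(i₆₀) = 0, where i₈ is the inclusion of the subpermutation on {1,3} into the permutation 132, i₉ is the inclusion of the subpermutation on {1,2} into 132, i₁₄ is the inclusion of the subpermutation on {1,3} into 231, i₁₅ is the inclusion of the subpermutation on {1,2} into 231, and i₆₀ is the inclusion of the subpermutation on {1,2,4,5} into 21354. -/

import Mathlib

/-- A permutation: a finite set equipped with two linear orders. -/
structure Perm2 : Type 1 where
  A : Type
  fin : Fintype A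
  ord1 : LinearOrder A
  ord2 : LinearOrder A

attribute [instance] Perm2.fin

/-- The first order. -/
def Perm2.lt1 (X : Perm2) (a b : X.A) : Prop := X.ord1.lt a b
/-- The second order. -/
def Perm2.lt2 (X : Perm2) (a b : X.A) : Prop := X.ord2.lt a b

/-- An embedding of permutations: an injective map preserving both orders. -/
structure Emb (X Y : Perm2) where
  f : X.A → Y.A
  inj : Function.Injective f
  mono1 : ∀ a b : X.A, X.lt1 a b → Y.lt1 (f a) (f b)
  mono2 : ∀ a b : X.A, X.lt2 a b → Y.lt2 (f a) (f b)

/-- Composition of embeddings. -/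
def Emb.comp {X Y Z : Perm2} (j : Emb Y Z) (i : Emb X Y) : Emb X Z where
  f := j.f ∘ i.f
  inj := j.inj.comp i.inj
  mono1 := fun a b h => j.mono1 _ _ (i.mono1 a b h)
  mono2 := fun a b h => j.mono2 _ _ (i.mono2 a b h)

/-- An amalgamation of the embeddings `i : Y → X` and `j : Y → Y'`. -/
structure Amalg {Y X Y' : Perm2} (i : Emb Y X) (j : Emb Y Y') : Type 1 where
  Z : Perm2
  i' : Emb Y' Z
  j' : Emb X Z
  comm : ∀ a : Y.A, i'.f (j.f a) = j'.f (i.f a)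
  cover : ∀ z : Z.A, (∃ a, i'.f a = z) ∨ (∃ b, j'.f b = z)

/-- Isomorphism of amalgamations. -/
def AmalgIso {Y X Y' : Perm2} {i : Emb Y X} {j : Emb Y Y'} (A B : Amalg i j) : Prop :=
  ∃ e : Emb A.Z B.Z, Function.Surjective e.f ∧
    (∀ a, e.f (A.i'.f a) = B.i'.f a) ∧ (∀ b, e.f (A.j'.f b) = B.j'.f b)

/-- A measure on the class of permutations valued in a commutative ring `k`. -/
structure PMeasure (k : Type) [CommRing k] : Type 1 where
  μ : ∀ {X Y : Perm2}, Emb X Y → k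
  iso_invariant : ∀ {X Y X' Y' : Perm2} (i : Emb X Y) (i' : Emb X' Y')
    (u : Emb X X') (v : Emb Y Y'), Function.Surjective u.f → Function.Surjective v.f →
    (∀ a, v.f (i.f a) = i'.f (u.f a)) → μ i = μ i'
  iso_one : ∀ {X Y : Perm2} (i : Emb X Y), Function.Surjective i.f → μ i = 1
  comp_mul : ∀ {X Y Z : Perm2} (i : Emb X Y) (j : Emb Y Z), μ (j.comp i) = μ j * μ i
  amalg_sum : ∀ {Y X Y' : Perm2} (i : Emb Y X) (j : Emb Y Y') (n : ℕ)
    (r : Fin n → Amalg i j), (∀ A : Amalg i j, ∃! α : Fin n, AmalgIso (r α) A) →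
    μ i = ∑ α : Fin n, μ (r α).i'

/-- The permutation denoted by a sequence of distinct natural numbers: the underlying
set consists of the listed numbers, the first order is the numerical one, and the second
order is the order of appearance in the sequence. -/
def listPerm (l : List ℕ) : Perm2 where
  A := {n : ℕ // n ∈ l.toFinset}
  fin := by infer_instance
  ord1 := LinearOrder.lift' (fun x => x.val) Subtype.val_injective
  ord2 := LinearOrder.lift' (fun x => l.idxOf x.val)
    (fun a b h => Subtype.ext ((List.idxOf_inj (List.mem_toFinset.mp a.2)).mp h))

/-- The subpermutation of `X` on a subset `S`, with the induced orders. -/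
noncomputable def subPerm (X : Perm2) (S : Set X.A) : Perm2 where
  A := S
  fin := S.toFinite.fintype
  ord1 := @LinearOrder.lift' _ _ X.ord1 (fun x => x.val) Subtype.val_injective
  ord2 := @LinearOrder.lift' _ _ X.ord2 (fun x => x.val) Subtype.val_injective

/-- The inclusion of a subpermutation. -/
noncomputable def subEmb (X : Perm2) (S : Set X.A) : Emb (subPerm X S) X where
  f := Subtype.val
  inj := Subtype.val_injective
  mono1 := fun _ _ h => h
  mono2 := fun _ _ h => h

/-! The relation is a signed sum of seventeen instances of the amalgamation axiom, each for a
pair of one-point extensions `i : Y → X` (new point `w`) and `j : Y → Y'` (new point `v`).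
An amalgamation of such a pair is determined up to isomorphism by how the images of `v` and
`w` compare in the two orders, and transitivity against the common points of `Y` restricts
these comparisons; so every instance reduces to a finite check of explicit amalgamations. -/

namespace Perm2

def cmp (X : Perm2) (a b : X.A) : Ordering × Ordering :=
  (letI := X.ord1; _root_.cmp a b, letI := X.ord2; _root_.cmp a b)

variable {X : Perm2} {a b : X.A}

theorem cmp_fst_eq_eq : (X.cmp a b).1 = .eq ↔ a = b := letI := X.ord1; cmp_eq_eq_iff a b

theorem cmp_snd_eq_eq : (X.cmp a b).2 = .eq ↔ a = b := letI := X.ord2; cmp_eq_eq_iff a b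

theorem cmp_fst_eq_lt : (X.cmp a b).1 = .lt ↔ X.lt1 a b := letI := X.ord1; cmp_eq_lt_iff a b

theorem cmp_snd_eq_lt : (X.cmp a b).2 = .lt ↔ X.lt2 a b := letI := X.ord2; cmp_eq_lt_iff a b

theorem cmp_self (a : X.A) : X.cmp a a = (.eq, .eq) :=
  Prod.ext (letI := X.ord1; cmp_self_eq_eq a) (letI := X.ord2; cmp_self_eq_eq a)

theorem cmp_swap (a b : X.A) : X.cmp b a = Prod.map Ordering.swap Ordering.swap (X.cmp a b) :=
  Prod.ext (letI := X.ord1; (_root_.cmp_swap a b).symm) (letI := X.ord2; (_root_.cmp_swap a b).symm)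

end Perm2

namespace Emb

variable {X Y : Perm2}

theorem cmp_map (e : Emb X Y) (a b : X.A) : Y.cmp (e.f a) (e.f b) = X.cmp a b :=
  Prod.ext (letI := X.ord1; letI := Y.ord1; StrictMono.cmp_map_eq e.mono1 a b)
    (letI := X.ord2; letI := Y.ord2; StrictMono.cmp_map_eq e.mono2 a b)

def ofCmp (f : X.A → Y.A) (hf : ∀ a b, Y.cmp (f a) (f b) = X.cmp a b) : Emb X Y where
  f := f
  inj a b h := Perm2.cmp_fst_eq_eq.mp (by rw [← hf, h, Perm2.cmp_fst_eq_eq])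
  mono1 a b h := Perm2.cmp_fst_eq_lt.mp (by rw [hf]; exact Perm2.cmp_fst_eq_lt.mpr h)
  mono2 a b h := Perm2.cmp_snd_eq_lt.mp (by rw [hf]; exact Perm2.cmp_snd_eq_lt.mpr h)

end Emb

def Ordering.Compatible (cq cp qp : Ordering) : Prop :=
  (qp = .lt → cq = .lt → cp = .lt) ∧ (qp = .gt → cp = .lt → cq = .lt) ∧ (qp = .eq → cq = cp)

instance (cq cp qp : Ordering) : Decidable (cq.Compatible cp qp) :=
  inferInstanceAs (Decidable (_ ∧ _ ∧ _))

theorem cmp_compatible {α : Type*} [LinearOrder α] (c q p : α) :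
    (cmp c q).Compatible (cmp c p) (cmp q p) := by
  simp only [Ordering.Compatible, cmp_eq_lt_iff, cmp_eq_gt_iff, cmp_eq_eq_iff]
  exact ⟨fun h h' => h'.trans h, fun h h' => h'.trans h, fun h => h ▸ rfl⟩

namespace Amalg

variable {Y X Y' : Perm2} {i : Emb Y X} {j : Emb Y Y'}

theorem iso_of_cmp_eq (A B : Amalg i j)
    (h : ∀ a b, A.Z.cmp (A.i'.f a) (A.j'.f b) = B.Z.cmp (B.i'.f a) (B.j'.f b)) :
    AmalgIso A B := by
  classical
  let e : A.Z.A → B.Z.A := fun z =>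
    if hz : ∃ a, A.i'.f a = z then B.i'.f hz.choose
    else B.j'.f ((A.cover z).resolve_left hz).choose
  have e_i (a : Y'.A) : e (A.i'.f a) = B.i'.f a := by
    have hz : ∃ a', A.i'.f a' = A.i'.f a := ⟨a, rfl⟩
    simp only [e, dif_pos hz, A.i'.inj hz.choose_spec]
  have e_j (b : X.A) : e (A.j'.f b) = B.j'.f b := by
    by_cases hz : ∃ a, A.i'.f a = A.j'.f b
    · have hab := h hz.choose b
      rw [hz.choose_spec, Perm2.cmp_self] at hab
      simp only [e, dif_pos hz]
      exact Perm2.cmp_fst_eq_eq.mp (congrArg Prod.fst hab).symm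
    · have hb := (A.cover (A.j'.f b)).resolve_left hz
      simp only [e, dif_neg hz, A.j'.inj hb.choose_spec]
  have e_cmp (z z' : A.Z.A) : B.Z.cmp (e z) (e z') = A.Z.cmp z z' := by
    rcases A.cover z with ⟨a, rfl⟩ | ⟨b, rfl⟩ <;> rcases A.cover z' with ⟨a', rfl⟩ | ⟨b', rfl⟩
    · rw [e_i, e_i, Emb.cmp_map, Emb.cmp_map]
    · rw [e_i, e_j, h]
    · rw [e_j, e_i, Perm2.cmp_swap, Perm2.cmp_swap (A.i'.f a'), h]
    · rw [e_j, e_j, Emb.cmp_map, Emb.cmp_map]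
  refine ⟨Emb.ofCmp e e_cmp, fun z => ?_, e_i, e_j⟩
  rcases B.cover z with ⟨a, rfl⟩ | ⟨b, rfl⟩
  exacts [⟨_, e_i a⟩, ⟨_, e_j b⟩]

variable (w : X.A) (v : Y'.A)

/-- When `X = i(Y) ∪ {w}` and `Y' = j(Y) ∪ {v}`, this determines `A` up to isomorphism
(`iso_of_sig_eq`). -/
def sig (A : Amalg i j) : Ordering × Ordering := A.Z.cmp (A.i'.f v) (A.j'.f w)

theorem sig_eq_of_iso {A B : Amalg i j} (h : AmalgIso A B) : A.sig w v = B.sig w v := by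
  obtain ⟨e, -, e_i, e_j⟩ := h
  rw [sig, sig, ← e_i, ← e_j, e.cmp_map]

theorem iso_of_sig_eq (hw : ∀ x, x = w ∨ ∃ y, i.f y = x) (hv : ∀ x, x = v ∨ ∃ y, j.f y = x)
    {A B : Amalg i j} (h : A.sig w v = B.sig w v) : AmalgIso A B := by
  refine iso_of_cmp_eq A B fun a b => ?_
  rcases hv a with rfl | ⟨y, rfl⟩
  · rcases hw b with rfl | ⟨y, rfl⟩
    · exact h
    · rw [← A.comm, ← B.comm, Emb.cmp_map, Emb.cmp_map]
  · rw [A.comm, B.comm, Emb.cmp_map, Emb.cmp_map]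

variable (i j)

/-- In `A.Z` the image of a point `y` of `Y` compares with those of `v` and `w` as `j y` with `v`
in `Y'` and as `i y` with `w` in `X`; transitivity (`cmp_compatible`) then restricts `A.sig w v`. -/
def Admissible (s : Ordering × Ordering) : Prop :=
  (s.1 = .eq ↔ s.2 = .eq) ∧ ∀ y,
    (Y'.cmp (j.f y) v).1.Compatible (X.cmp (i.f y) w).1 s.1 ∧
    (Y'.cmp (j.f y) v).2.Compatible (X.cmp (i.f y) w).2 s.2

instance : DecidablePred (Admissible i j w v) := fun _ =>
  inferInstanceAs (Decidable (_ ∧ _))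

variable {i j}

theorem sig_admissible (A : Amalg i j) : Admissible i j w v (A.sig w v) := by
  refine ⟨by rw [sig, Perm2.cmp_fst_eq_eq, Perm2.cmp_snd_eq_eq], fun y => ?_⟩
  rw [← A.i'.cmp_map, ← A.j'.cmp_map, ← A.comm]
  exact ⟨letI := A.Z.ord1; cmp_compatible _ _ _, letI := A.Z.ord2; cmp_compatible _ _ _⟩

end Amalg

namespace PMeasure

variable {k : Type} [CommRing k] (m : PMeasure k)

theorem μ_eq_sum_of_sig {Y X Y' : Perm2} {i : Emb Y X} {j : Emb Y Y'} {w : X.A} {v : Y'.A}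
    (hw : ∀ x, x = w ∨ ∃ y, i.f y = x) (hv : ∀ x, x = v ∨ ∃ y, j.f y = x)
    {n : ℕ} (r : Fin n → Amalg i j) (hr : Function.Injective fun α => (r α).sig w v)
    (hadm : ∀ s, Amalg.Admissible i j w v s → ∃ α, (r α).sig w v = s) :
    m.μ i = ∑ α, m.μ (r α).i' := by
  refine m.amalg_sum i j n r fun A => ?_
  obtain ⟨α, hα⟩ := hadm _ (A.sig_admissible w v)
  exact ⟨α, Amalg.iso_of_sig_eq w v hw hv hα,
    fun β hβ => hr ((Amalg.sig_eq_of_iso w v hβ).trans hα.symm)⟩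

theorem μ_eq_μ_subEmb {X Y : Perm2} (e : Emb X Y) {S : Set Y.A}
    (hS : ∀ y, y ∈ S ↔ ∃ x, e.f x = y) : m.μ e = m.μ (subEmb Y S) := by
  refine m.iso_invariant e (subEmb Y S) (Emb.ofCmp (fun x => ⟨e.f x, (hS _).2 ⟨x, rfl⟩⟩) e.cmp_map)
    (Emb.ofCmp id fun _ _ => rfl) (fun y => ?_) (fun y => ⟨y, rfl⟩) fun _ => rfl
  obtain ⟨x, hx⟩ := (hS y.val).1 y.2
  exact ⟨x, Subtype.ext hx⟩

end PMeasure

instance (l : List ℕ) : DecidableEq (listPerm l).A :=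
  inferInstanceAs (DecidableEq {n : ℕ // n ∈ l.toFinset})

/-- Typed as `(listPerm l).A` rather than as the underlying subtype, which instance search
cannot see through. -/
def listPt (l : List ℕ) (n : ℕ) (h : n ∈ l := by decide) : (listPerm l).A :=
  ⟨n, List.mem_toFinset.2 h⟩

noncomputable abbrev listSubEmb (l : List ℕ) (S : Set ℕ) :
    Emb (subPerm (listPerm l) {a | a.val ∈ S}) (listPerm l) :=
  subEmb (listPerm l) {a | a.val ∈ S}

section ListEmb

variable (l₁ l₂ : List ℕ) (S : Set ℕ) [DecidablePred (· ∈ S)]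

/-- An embedding preserves the order of values, so it is determined by its image: the embedding
of `l₁` into `l₂` with image `S` sends the `k`-th smallest entry of `l₁` to the `k`-th smallest
entry of `l₂` lying in `S`. -/
def rankMap (n : ℕ) : ℕ :=
  ((l₂.filter (· ∈ S)).insertionSort (· ≤ ·)).getD (l₁.countP (· < n)) 0

def IsListEmb : Prop :=
  (∀ a ∈ l₁, rankMap l₁ l₂ S a ∈ l₂) ∧
  (∀ a ∈ l₁, ∀ b ∈ l₁,
    (cmp (rankMap l₁ l₂ S a) (rankMap l₁ l₂ S b),
      cmp (l₂.idxOf (rankMap l₁ l₂ S a)) (l₂.idxOf (rankMap l₁ l₂ S b))) =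
    (cmp a b, cmp (l₁.idxOf a) (l₁.idxOf b))) ∧
  (∀ b ∈ l₂, b ∈ S ↔ ∃ a ∈ l₁, rankMap l₁ l₂ S a = b)

instance : Decidable (IsListEmb l₁ l₂ S) :=
  inferInstanceAs (Decidable (_ ∧ _ ∧ _))

def listEmb (h : IsListEmb l₁ l₂ S := by decide) : Emb (listPerm l₁) (listPerm l₂) :=
  Emb.ofCmp
    (fun a => ⟨rankMap l₁ l₂ S a.val, List.mem_toFinset.2 (h.1 a.val (List.mem_toFinset.1 a.2))⟩)
    fun a b => h.2.1 a.val (List.mem_toFinset.1 a.2) b.val (List.mem_toFinset.1 b.2)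

end ListEmb

def listAmalg {lY lX lY' : List ℕ} {i : Emb (listPerm lY) (listPerm lX)}
    {j : Emb (listPerm lY) (listPerm lY')} (lZ : List ℕ) (T U : Set ℕ)
    [DecidablePred (· ∈ T)] [DecidablePred (· ∈ U)]
    (hT : IsListEmb lY' lZ T := by decide) (hU : IsListEmb lX lZ U := by decide)
    (comm : ∀ a, (listEmb lY' lZ T hT).f (j.f a) = (listEmb lX lZ U hU).f (i.f a) := by decide)
    (cover : ∀ z, (∃ a, (listEmb lY' lZ T hT).f a = z) ∨ ∃ b, (listEmb lX lZ U hU).f b = z := by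
      decide) :
    Amalg i j :=
  ⟨listPerm lZ, listEmb lY' lZ T hT, listEmb lX lZ U hU, comm, cover⟩

namespace PMeasure

variable {k : Type} [CommRing k] (m : PMeasure k)

theorem μ_listSubEmb_of_subset {l : List ℕ} {S : Set ℕ} (h : ∀ n ∈ l, n ∈ S) :
    m.μ (listSubEmb l S) = 1 :=
  m.iso_one _ fun b => ⟨⟨b, h _ (List.mem_toFinset.1 b.2)⟩, rfl⟩

@[simp]
theorem μ_listEmb {l₁ l₂ : List ℕ} {S : Set ℕ} [DecidablePred (· ∈ S)]
    (h : IsListEmb l₁ l₂ S) :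
    m.μ (listEmb l₁ l₂ S h) = m.μ (listSubEmb l₂ S) := by
  refine m.μ_eq_μ_subEmb _ fun b => (h.2.2 b.val (List.mem_toFinset.1 b.2)).trans ?_
  exact ⟨fun ⟨a, ha, hab⟩ => ⟨⟨a, List.mem_toFinset.2 ha⟩, Subtype.ext hab⟩,
    fun ⟨a, hab⟩ => ⟨a.val, List.mem_toFinset.1 a.2, congrArg Subtype.val hab⟩⟩

-- `amalg_X_S_Y'_T` is the amalgamation axiom for the subpermutations `S` of `X` and `T` of `Y'`,
-- which have the same pattern.
theorem amalg_21_1_12_2 :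
    m.μ (listSubEmb [2,1] {1}) =
      m.μ (listSubEmb [3,1,2] {1,2}) + m.μ (listSubEmb [1,3,2] {1,2}) := by
  have h := m.μ_eq_sum_of_sig
    (i := listEmb [1] [2,1] {1}) (j := listEmb [1] [1,2] {2})
    (w := listPt [2,1] 2) (v := listPt [1,2] 1) (by decide) (by decide)
    ![listAmalg [3,1,2] {1,2} {2,3}, listAmalg [1,3,2] {1,2} {2,3}]
    (by decide) (by decide)
  simpa [Fin.sum_univ_succ, add_assoc, listAmalg] using h

theorem amalg_21_1_21_1 :
    m.μ (listSubEmb [2,1] {1}) =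
      1 + m.μ (listSubEmb [2,3,1] {1,3}) + m.μ (listSubEmb [3,2,1] {1,2}) +
        m.μ (listSubEmb [3,2,1] {1,3}) + m.μ (listSubEmb [2,3,1] {1,2}) := by
  have h := m.μ_eq_sum_of_sig
    (i := listEmb [1] [2,1] {1}) (j := listEmb [1] [2,1] {1})
    (w := listPt [2,1] 2) (v := listPt [2,1] 2) (by decide) (by decide)
    ![listAmalg [2,1] {1,2} {1,2}, listAmalg [2,3,1] {1,3} {1,2}, listAmalg [3,2,1] {1,2} {1,3},
      listAmalg [3,2,1] {1,3} {1,2}, listAmalg [2,3,1] {1,2} {1,3}]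
    (by decide) (by decide)
  simpa [Fin.sum_univ_succ, add_assoc, listAmalg,
    m.μ_listSubEmb_of_subset (l := [2,1]) (S := {1,2}) (by decide)] using h

theorem amalg_21_1_21_2 :
    m.μ (listSubEmb [2,1] {1}) = m.μ (listSubEmb [3,2,1] {1,2}) := by
  have h := m.μ_eq_sum_of_sig
    (i := listEmb [1] [2,1] {1}) (j := listEmb [1] [2,1] {2})
    (w := listPt [2,1] 2) (v := listPt [2,1] 1) (by decide) (by decide)
    ![listAmalg [3,2,1] {1,2} {2,3}]
    (by decide) (by decide)
  simpa [Fin.sum_univ_succ, add_assoc, listAmalg] using h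

theorem amalg_21_1_12_1 :
    m.μ (listSubEmb [2,1] {1}) =
      m.μ (listSubEmb [2,1,3] {1,3}) + m.μ (listSubEmb [3,1,2] {1,2}) := by
  have h := m.μ_eq_sum_of_sig
    (i := listEmb [1] [2,1] {1}) (j := listEmb [1] [1,2] {1})
    (w := listPt [2,1] 2) (v := listPt [1,2] 2) (by decide) (by decide)
    ![listAmalg [2,1,3] {1,3} {1,2}, listAmalg [3,1,2] {1,2} {1,3}]
    (by decide) (by decide)
  simpa [Fin.sum_univ_succ, add_assoc, listAmalg] using h

theorem amalg_21_2_12_2 :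
    m.μ (listSubEmb [2,1] {2}) =
      m.μ (listSubEmb [2,3,1] {2,3}) + m.μ (listSubEmb [1,3,2] {1,3}) := by
  have h := m.μ_eq_sum_of_sig
    (i := listEmb [1] [2,1] {2}) (j := listEmb [1] [1,2] {2})
    (w := listPt [2,1] 1) (v := listPt [1,2] 1) (by decide) (by decide)
    ![listAmalg [2,3,1] {2,3} {1,3}, listAmalg [1,3,2] {1,3} {2,3}]
    (by decide) (by decide)
  simpa [Fin.sum_univ_succ, add_assoc, listAmalg] using h

theorem amalg_21_2_12_1 :
    m.μ (listSubEmb [2,1] {2}) =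
      m.μ (listSubEmb [2,1,3] {2,3}) + m.μ (listSubEmb [2,3,1] {2,3}) := by
  have h := m.μ_eq_sum_of_sig
    (i := listEmb [1] [2,1] {2}) (j := listEmb [1] [1,2] {1})
    (w := listPt [2,1] 1) (v := listPt [1,2] 2) (by decide) (by decide)
    ![listAmalg [2,1,3] {2,3} {1,2}, listAmalg [2,3,1] {2,3} {1,2}]
    (by decide) (by decide)
  simpa [Fin.sum_univ_succ, add_assoc, listAmalg] using h

theorem amalg_213_13_132_12 :
    m.μ (listSubEmb [2,1,3] {1,3}) = m.μ (listSubEmb [2,1,4,3] {1,3,4}) := by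
  have h := m.μ_eq_sum_of_sig
    (i := listEmb [1,2] [2,1,3] {1,3}) (j := listEmb [1,2] [1,3,2] {1,2})
    (w := listPt [2,1,3] 2) (v := listPt [1,3,2] 3) (by decide) (by decide)
    ![listAmalg [2,1,4,3] {1,3,4} {1,2,3}]
    (by decide) (by decide)
  simpa [Fin.sum_univ_succ, add_assoc, listAmalg] using h

theorem amalg_213_23_132_13 :
    m.μ (listSubEmb [2,1,3] {2,3}) = m.μ (listSubEmb [2,1,4,3] {2,3,4}) := by
  have h := m.μ_eq_sum_of_sig
    (i := listEmb [1,2] [2,1,3] {2,3}) (j := listEmb [1,2] [1,3,2] {1,3})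
    (w := listPt [2,1,3] 1) (v := listPt [1,3,2] 2) (by decide) (by decide)
    ![listAmalg [2,1,4,3] {2,3,4} {1,2,4}]
    (by decide) (by decide)
  simpa [Fin.sum_univ_succ, add_assoc, listAmalg] using h

theorem amalg_132_23_132_23 :
    m.μ (listSubEmb [1,3,2] {2,3}) =
      1 + m.μ (listSubEmb [1,2,4,3] {2,3,4}) + m.μ (listSubEmb [2,1,4,3] {1,3,4}) +
        m.μ (listSubEmb [2,1,4,3] {2,3,4}) + m.μ (listSubEmb [1,2,4,3] {1,3,4}) := by
  have h := m.μ_eq_sum_of_sig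
    (i := listEmb [2,1] [1,3,2] {2,3}) (j := listEmb [2,1] [1,3,2] {2,3})
    (w := listPt [1,3,2] 1) (v := listPt [1,3,2] 1) (by decide) (by decide)
    ![listAmalg [1,3,2] {1,2,3} {1,2,3}, listAmalg [1,2,4,3] {2,3,4} {1,3,4},
      listAmalg [2,1,4,3] {1,3,4} {2,3,4}, listAmalg [2,1,4,3] {2,3,4} {1,3,4},
      listAmalg [1,2,4,3] {1,3,4} {2,3,4}]
    (by decide) (by decide)
  simpa [Fin.sum_univ_succ, add_assoc, listAmalg,
    m.μ_listSubEmb_of_subset (l := [1,3,2]) (S := {1,2,3}) (by decide)] using h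

theorem amalg_132_23_213_12 :
    m.μ (listSubEmb [1,3,2] {2,3}) = m.μ (listSubEmb [1,3,2,4] {2,3,4}) := by
  have h := m.μ_eq_sum_of_sig
    (i := listEmb [2,1] [1,3,2] {2,3}) (j := listEmb [2,1] [2,1,3] {1,2})
    (w := listPt [1,3,2] 1) (v := listPt [2,1,3] 3) (by decide) (by decide)
    ![listAmalg [1,3,2,4] {2,3,4} {1,2,3}]
    (by decide) (by decide)
  simpa [Fin.sum_univ_succ, add_assoc, listAmalg] using h

theorem amalg_321_13_213_12 :
    m.μ (listSubEmb [3,2,1] {1,3}) = m.μ (listSubEmb [3,2,1,4] {1,3,4}) := by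
  have h := m.μ_eq_sum_of_sig
    (i := listEmb [2,1] [3,2,1] {1,3}) (j := listEmb [2,1] [2,1,3] {1,2})
    (w := listPt [3,2,1] 2) (v := listPt [2,1,3] 3) (by decide) (by decide)
    ![listAmalg [3,2,1,4] {1,3,4} {1,2,3}]
    (by decide) (by decide)
  simpa [Fin.sum_univ_succ, add_assoc, listAmalg] using h

theorem amalg_1243_234_2143_134 :
    m.μ (listSubEmb [1,2,4,3] {2,3,4}) =
      m.μ (listSubEmb [1,3,2,5,4] {2,3,4,5}) + m.μ (listSubEmb [3,1,2,5,4] {2,3,4,5}) := by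
  have h := m.μ_eq_sum_of_sig
    (i := listEmb [1,3,2] [1,2,4,3] {2,3,4}) (j := listEmb [1,3,2] [2,1,4,3] {1,3,4})
    (w := listPt [1,2,4,3] 1) (v := listPt [2,1,4,3] 2) (by decide) (by decide)
    ![listAmalg [1,3,2,5,4] {2,3,4,5} {1,2,4,5}, listAmalg [3,1,2,5,4] {2,3,4,5} {1,2,4,5}]
    (by decide) (by decide)
  simpa [Fin.sum_univ_succ, add_assoc, listAmalg] using h

theorem amalg_2143_234_2143_134 :
    m.μ (listSubEmb [2,1,4,3] {2,3,4}) = m.μ (listSubEmb [3,2,1,5,4] {2,3,4,5}) := by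
  have h := m.μ_eq_sum_of_sig
    (i := listEmb [1,3,2] [2,1,4,3] {2,3,4}) (j := listEmb [1,3,2] [2,1,4,3] {1,3,4})
    (w := listPt [2,1,4,3] 1) (v := listPt [2,1,4,3] 2) (by decide) (by decide)
    ![listAmalg [3,2,1,5,4] {2,3,4,5} {1,2,4,5}]
    (by decide) (by decide)
  simpa [Fin.sum_univ_succ, add_assoc, listAmalg] using h

theorem amalg_2143_234_2143_234 :
    m.μ (listSubEmb [2,1,4,3] {2,3,4}) =
      1 + m.μ (listSubEmb [3,1,2,5,4] {2,3,4,5}) + m.μ (listSubEmb [3,2,1,5,4] {1,3,4,5}) +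
        m.μ (listSubEmb [3,2,1,5,4] {2,3,4,5}) + m.μ (listSubEmb [3,1,2,5,4] {1,3,4,5}) := by
  have h := m.μ_eq_sum_of_sig
    (i := listEmb [1,3,2] [2,1,4,3] {2,3,4}) (j := listEmb [1,3,2] [2,1,4,3] {2,3,4})
    (w := listPt [2,1,4,3] 1) (v := listPt [2,1,4,3] 1) (by decide) (by decide)
    ![listAmalg [2,1,4,3] {1,2,3,4} {1,2,3,4}, listAmalg [3,1,2,5,4] {2,3,4,5} {1,3,4,5},
      listAmalg [3,2,1,5,4] {1,3,4,5} {2,3,4,5}, listAmalg [3,2,1,5,4] {2,3,4,5} {1,3,4,5},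
      listAmalg [3,1,2,5,4] {1,3,4,5} {2,3,4,5}]
    (by decide) (by decide)
  simpa [Fin.sum_univ_succ, add_assoc, listAmalg,
    m.μ_listSubEmb_of_subset (l := [2,1,4,3]) (S := {1,2,3,4}) (by decide)] using h

theorem amalg_1243_134_2143_134 :
    m.μ (listSubEmb [1,2,4,3] {1,3,4}) =
      m.μ (listSubEmb [3,1,2,5,4] {1,3,4,5}) + m.μ (listSubEmb [2,1,3,5,4] {1,2,4,5}) := by
  have h := m.μ_eq_sum_of_sig
    (i := listEmb [1,3,2] [1,2,4,3] {1,3,4}) (j := listEmb [1,3,2] [2,1,4,3] {1,3,4})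
    (w := listPt [1,2,4,3] 2) (v := listPt [2,1,4,3] 2) (by decide) (by decide)
    ![listAmalg [3,1,2,5,4] {1,3,4,5} {1,2,4,5}, listAmalg [2,1,3,5,4] {1,2,4,5} {1,3,4,5}]
    (by decide) (by decide)
  simpa [Fin.sum_univ_succ, add_assoc, listAmalg] using h

theorem amalg_1324_234_2143_123 :
    m.μ (listSubEmb [1,3,2,4] {2,3,4}) = m.μ (listSubEmb [1,3,2,5,4] {2,3,4,5}) := by
  have h := m.μ_eq_sum_of_sig
    (i := listEmb [2,1,3] [1,3,2,4] {2,3,4}) (j := listEmb [2,1,3] [2,1,4,3] {1,2,3})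
    (w := listPt [1,3,2,4] 1) (v := listPt [2,1,4,3] 4) (by decide) (by decide)
    ![listAmalg [1,3,2,5,4] {2,3,4,5} {1,2,3,4}]
    (by decide) (by decide)
  simpa [Fin.sum_univ_succ, add_assoc, listAmalg] using h

theorem amalg_3214_134_2143_123 :
    m.μ (listSubEmb [3,2,1,4] {1,3,4}) = m.μ (listSubEmb [3,2,1,5,4] {1,3,4,5}) := by
  have h := m.μ_eq_sum_of_sig
    (i := listEmb [2,1,3] [3,2,1,4] {1,3,4}) (j := listEmb [2,1,3] [2,1,4,3] {1,2,3})
    (w := listPt [3,2,1,4] 2) (v := listPt [2,1,4,3] 4) (by decide) (by decide)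
    ![listAmalg [3,2,1,5,4] {1,3,4,5} {1,2,3,4}]
    (by decide) (by decide)
  simpa [Fin.sum_univ_succ, add_assoc, listAmalg] using h

end PMeasure

/-- The inhomogeneous linear relation 1 + μ(i₈) + μ(i₉) + μ(i₁₄) + μ(i₁₅) + μ(i₆₀) = 0
holds for every measure, where i₈ : {1,3} ⊂ 132, i₉ : {1,2} ⊂ 132, i₁₄ : {1,3} ⊂ 231,
i₁₅ : {1,2} ⊂ 231, and i₆₀ : {1,2,4,5} ⊂ 21354. -/
theorem inhomogeneous_linear_relation (k : Type) [CommRing k] (m : PMeasure k) :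
    1 + m.μ (subEmb (listPerm [1,3,2]) {a | a.val ∈ ({1,3} : Set ℕ)})
      + m.μ (subEmb (listPerm [1,3,2]) {a | a.val ∈ ({1,2} : Set ℕ)})
      + m.μ (subEmb (listPerm [2,3,1]) {a | a.val ∈ ({1,3} : Set ℕ)})
      + m.μ (subEmb (listPerm [2,3,1]) {a | a.val ∈ ({1,2} : Set ℕ)})
      + m.μ (subEmb (listPerm [2,1,3,5,4]) {a | a.val ∈ ({1,2,4,5} : Set ℕ)}) = 0 := by
  linear_combination -m.amalg_21_1_12_2 - m.amalg_21_1_21_1 + m.amalg_21_1_21_2 + m.amalg_21_1_12_1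
    - m.amalg_21_2_12_2 + m.amalg_21_2_12_1 + m.amalg_213_13_132_12 + m.amalg_213_23_132_13
    - m.amalg_132_23_132_23 + m.amalg_132_23_213_12 - m.amalg_321_13_213_12
    - m.amalg_1243_234_2143_134 - m.amalg_2143_234_2143_134 + m.amalg_2143_234_2143_234
    - m.amalg_1243_134_2143_134 + m.amalg_1324_234_2143_123 - m.amalg_3214_134_2143_123
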